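/- arXiv:1407.3531 — 7 statements merged into one kernel-verified Lean document; each statement's English description precedes it below -/
import Mathlib

section
/- An n-cycle C_n is A-connected for an abelian group A if and only if |A| ≥ n + 1. -/
open Finset


/-- A simple graph `G` is `A`-connected: for every zero-sum function `b` on vertices
there is an orientation together with a nowhere-zero `A`-valued edge labeling whose
boundary is `b`; this is encoded by a skew-symmetric function `f : V → V → A` which
is nonzero exactly on adjacent pairs. -/
def SimpleGraph.AConnS {V : Type} [Fintype V] (A : Type) [AddCommGroup A]
    (G : SimpleGraph V) : Prop :=
  ∀ b : V → A, ∑ v, b v = 0 →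
    ∃ f : V → V → A, (∀ v w, f v w = - f w v) ∧
      (∀ v w, G.Adj v w → f v w ≠ 0) ∧
      (∀ v w, ¬ G.Adj v w → f v w = 0) ∧
      ∀ v, ∑ w, f v w = b v

/-- `Z₃`-connectivity of a simple graph. -/
abbrev SimpleGraph.Z3Conn {V : Type} [Fintype V] (G : SimpleGraph V) : Prop :=
  G.AConnS (ZMod 3)

/-- `d` is the degree sequence of `G` (up to permutation of the entries). -/
def degSeq {n : ℕ} (G : SimpleGraph (Fin n)) (d : Fin n → ℕ) : Prop :=
  ∃ σ : Equiv.Perm (Fin n), ∀ i, (G.neighborSet (σ i)).ncard = d i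

/-- `d` is graphic: it is realized by some simple graph. -/
def Graphic {n : ℕ} (d : Fin n → ℕ) : Prop :=
  ∃ G : SimpleGraph (Fin n), degSeq G d


section CycleAux

variable {n : ℕ} {A : Type} [AddCommGroup A]

lemma fin_val_one' (hn : 3 ≤ n) [NeZero n] : ((1 : Fin n) : ℕ) = 1 := by
  rw [Fin.val_one']
  exact Nat.mod_eq_of_lt (by omega)

lemma fin_sub_one_val' [NeZero n] (a : Fin n) :
    ((a - 1 : Fin n) : ℕ) = if a = 0 then n - 1 else a.val - 1 := by
  cases n with
  | zero => exact absurd rfl (NeZero.ne 0)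
  | succ m => simpa using Fin.coe_sub_one a

lemma fin_two_ne_zero' (hn : 3 ≤ n) [NeZero n] : (1 + 1 : Fin n) ≠ 0 := by
  intro h
  have := congrArg Fin.val h
  rw [Fin.val_add, fin_val_one' hn, Fin.val_zero, Nat.mod_eq_of_lt (by omega)] at this
  omega

lemma fin_add_one_ne_sub_one' (hn : 3 ≤ n) [NeZero n] (v : Fin n) : v + 1 ≠ v - 1 := by
  intro h
  have h2 : v + (1 + 1) = v + 0 := by
    rw [← add_assoc, h]
    abel
  exact fin_two_ne_zero' hn (add_left_cancel h2)

lemma cycle_adj' (hn : 3 ≤ n) [NeZero n] {u v : Fin n} :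
    (SimpleGraph.cycleGraph n).Adj u v ↔ u = v + 1 ∨ v = u + 1 := by
  rw [SimpleGraph.cycleGraph_adj']
  have h1 : ∀ w z : Fin n, (w - z : Fin n).val = 1 ↔ w = z + 1 := by
    intro w z
    rw [show (1:ℕ) = ((1 : Fin n) : ℕ) from (fin_val_one' hn).symm, ← Fin.ext_iff,
      sub_eq_iff_eq_add', add_comm]
  rw [h1, h1]

lemma fin_not_both' (hn : 3 ≤ n) [NeZero n] {v w : Fin n} (h1 : w = v + 1) (h2 : v = w + 1) :
    False := by
  rw [h1] at h2
  have : v + 0 = v + (1 + 1) := by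
    rw [add_zero, ← add_assoc]
    exact h2
  exact fin_two_ne_zero' hn (add_left_cancel this).symm

lemma fin_mk_succ_sub_one' [NeZero n] (k : ℕ) (hk : k + 1 < n) :
    (⟨k + 1, hk⟩ : Fin n) - 1 = ⟨k, by omega⟩ := by
  have hne : (⟨k + 1, hk⟩ : Fin n) ≠ 0 := by
    simp [Fin.ext_iff]
  apply Fin.ext
  rw [fin_sub_one_val', if_neg hne]
  simp

lemma fin_mk_zero' [NeZero n] (h : 0 < n) : (⟨0, h⟩ : Fin n) = 0 := by
  apply Fin.ext
  simp

/-- The sum over all vertices reduces to the two neighbors in the cycle. -/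
lemma cycle_row_sum (hn : 3 ≤ n) [NeZero n] (f : Fin n → Fin n → A)
    (hzero : ∀ v w, ¬ (SimpleGraph.cycleGraph n).Adj v w → f v w = 0) (v : Fin n) :
    ∑ w, f v w = f v (v + 1) + f v (v - 1) := by
  rw [← Finset.sum_pair (fin_add_one_ne_sub_one' hn v)]
  refine (Finset.sum_subset (Finset.subset_univ _) ?_).symm
  intro w _ hw
  simp only [Finset.mem_insert, Finset.mem_singleton] at hw
  push_neg at hw
  apply hzero
  rw [cycle_adj' hn]
  push_neg
  refine ⟨?_, hw.1⟩
  intro h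
  exact hw.2 (by rw [h, add_sub_cancel_right])

end CycleAux

/-- An `n`-cycle is `A`-connected iff `|A| ≥ n + 1`. -/
theorem cycle_AConn_iff (n : ℕ) (hn : 3 ≤ n) (A : Type) [AddCommGroup A] [Fintype A] :
    (SimpleGraph.cycleGraph n).AConnS A ↔ n + 1 ≤ Fintype.card A := by
  haveI : NeZero n := ⟨by omega⟩
  constructor
  · -- A-connected implies |A| ≥ n + 1
    intro hAC
    by_contra hcard
    push_neg at hcard
    have hm : Fintype.card A ≤ n := by omega
    set e := (Fintype.equivFin A).symm with he
    set g0 : Fin n → A := fun i => if h : i.val < Fintype.card A then e ⟨i.val, h⟩ else 0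
      with hg0
    have hg0surj : Function.Surjective g0 := by
      intro a
      obtain ⟨j, hj⟩ := e.surjective a
      refine ⟨⟨j.val, by omega⟩, ?_⟩
      simp only [hg0, j.isLt, dif_pos]
      rw [← hj]
    set last : Fin n := (0 : Fin n) - 1 with hlast
    set g : Fin n → A := fun i => g0 i - g0 last with hg
    have hgsurj : Function.Surjective g := by
      intro a
      obtain ⟨i, hi⟩ := hg0surj (a + g0 last)
      exact ⟨i, by rw [hg]; simp only; rw [hi]; abel⟩
    have hglast : g last = 0 := sub_self _
    set b : Fin n → A := fun i => if i = 0 then g 0 else g i - g (i - 1) with hbdef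
    set b' : ℕ → A := fun j => if h : j < n then b ⟨j, h⟩ else 0 with hb'
    have key : ∀ k, ∀ hk : k < n, ∑ j ∈ Finset.range (k + 1), b' j = g ⟨k, hk⟩ := by
      intro k
      induction k with
      | zero =>
        intro hk
        rw [Finset.sum_range_one]
        simp only [hb', hk, dif_pos]
        rw [fin_mk_zero' (by omega), hbdef]
        simp
      | succ k ih =>
        intro hk
        rw [Finset.sum_range_succ, ih (by omega)]
        have h1 : b' (k + 1) = b ⟨k + 1, hk⟩ := dif_pos hk
        have hne : (⟨k + 1, hk⟩ : Fin n) ≠ 0 := by simp [Fin.ext_iff]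
        rw [h1, hbdef]
        simp only [if_neg hne]
        rw [fin_mk_succ_sub_one' k hk]
        abel
    have hlastmk : (⟨n - 1, by omega⟩ : Fin n) = last := by
      apply Fin.ext
      rw [hlast, fin_sub_one_val', if_pos rfl]
    have hzs : ∑ v, b v = 0 := by
      have h1 := key (n - 1) (by omega)
      rw [show n - 1 + 1 = n by omega, hlastmk] at h1
      have h2 : ∑ j ∈ Finset.range n, b' j = ∑ v, b v := by
        rw [← Fin.sum_univ_eq_sum_range]
        apply Finset.sum_congr rfl
        intro i _
        simp [hb', i.isLt]
      rw [← h2, h1, hglast]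
    obtain ⟨f, hskew, hnz, hzero, hsum⟩ := hAC b hzs
    set x : Fin n → A := fun i => f i (i + 1) with hx
    have hrec : ∀ v : Fin n, x v = x (v - 1) + b v := by
      intro v
      have h1 := cycle_row_sum hn f hzero v
      rw [hsum v] at h1
      have h2 : f v (v - 1) = - x (v - 1) := by
        rw [hskew v (v - 1), hx]
        simp only
        rw [show v - 1 + 1 = v by abel]
      rw [h2] at h1
      have h1' : b v = x v + - x (v - 1) := h1
      rw [h1']
      abel
    have hx0 : ∀ k, ∀ hk : k < n, x ⟨k, hk⟩ = x last + g ⟨k, hk⟩ := by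
      intro k
      induction k with
      | zero =>
        intro hk
        rw [fin_mk_zero' (by omega), hrec 0, ← hlast]
        have hb0 : b 0 = g 0 := by simp [hbdef]
        rw [hb0]
      | succ k ih =>
        intro hk
        rw [hrec ⟨k + 1, hk⟩, fin_mk_succ_sub_one' k hk, ih (by omega), hbdef]
        simp only [if_neg (show (⟨k + 1, hk⟩ : Fin n) ≠ 0 by simp [Fin.ext_iff])]
        rw [fin_mk_succ_sub_one' k hk]
        abel
    obtain ⟨i, hi⟩ := hgsurj (- x last)
    have hxi : x i = 0 := by
      have := hx0 i.val i.isLt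
      rw [Fin.eta] at this
      rw [this, hi]
      abel
    exact hnz i (i + 1) ((cycle_adj' hn).mpr (Or.inr rfl)) hxi
  · -- |A| ≥ n + 1 implies A-connected
    intro hcard b hb
    set b' : ℕ → A := fun j => if h : j < n then b ⟨j, h⟩ else 0 with hb'
    set s : Fin n → A := fun i => ∑ j ∈ Finset.range (i.val + 1), b' j with hs
    classical
    have hcex : ∃ c : A, ∀ i : Fin n, c ≠ -(s i) := by
      by_contra h
      push_neg at h
      have hsub : (Finset.univ : Finset A) ⊆ Finset.image (fun i => -(s i)) Finset.univ := by
        intro a _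
        obtain ⟨i, hi⟩ := h a
        exact Finset.mem_image.mpr ⟨i, Finset.mem_univ i, hi.symm⟩
      have h1 := Finset.card_le_card hsub
      have h2 : (Finset.image (fun i => -(s i)) Finset.univ).card ≤ n := by
        refine le_trans Finset.card_image_le ?_
        simp
      rw [Finset.card_univ] at h1
      omega
    obtain ⟨c, hc⟩ := hcex
    set x : Fin n → A := fun i => c + s i with hx
    have hxne : ∀ i, x i ≠ 0 := by
      intro i h
      exact hc i (eq_neg_of_add_eq_zero_left h)
    -- partial sum facts
    have hsv : ∀ v : Fin n, v ≠ 0 → s v = s (v - 1) + b v := by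
      intro v hv
      have hval : (v - 1 : Fin n).val = v.val - 1 := by
        rw [fin_sub_one_val', if_neg hv]
      have hpos : 0 < v.val := by
        rcases Nat.eq_zero_or_pos v.val with h | h
        · exact absurd (Fin.ext h) hv
        · exact h
      rw [hs]
      simp only [hval]
      rw [show v.val - 1 + 1 = v.val by omega, Finset.sum_range_succ]
      congr 1
      simp [hb', v.isLt]
    have hs0 : s 0 = b 0 := by
      rw [hs]
      simp only [Fin.val_zero, zero_add, Finset.sum_range_one]
      simp [hb', show (0:ℕ) < n by omega, fin_mk_zero' (show 0 < n by omega)]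
    have hslast : s ((0 : Fin n) - 1) = 0 := by
      have hval : ((0 : Fin n) - 1).val = n - 1 := by
        rw [fin_sub_one_val']
        exact if_pos rfl
      rw [hs]
      simp only [hval]
      rw [show n - 1 + 1 = n by omega]
      have h2 : ∑ j ∈ Finset.range n, b' j = ∑ v, b v := by
        rw [← Fin.sum_univ_eq_sum_range]
        apply Finset.sum_congr rfl
        intro i _
        simp [hb', i.isLt]
      rw [h2, hb]
    set F : Fin n → Fin n → A :=
      fun v w => if w = v + 1 then x v else if v = w + 1 then -(x w) else 0 with hF
    have hFdef : ∀ v w, F v w = if w = v + 1 then x v else if v = w + 1 then -(x w) else 0 :=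
      fun v w => by rw [hF]
    refine ⟨F, ?_, ?_, ?_, ?_⟩
    · intro v w
      rw [hFdef, hFdef]
      by_cases h1 : w = v + 1 <;> by_cases h2 : v = w + 1
      · exact (fin_not_both' hn h1 h2).elim
      · rw [if_pos h1, if_neg h2, if_pos h1, neg_neg]
      · rw [if_neg h1, if_pos h2, if_pos h2]
      · rw [if_neg h1, if_neg h2, if_neg h2, if_neg h1, neg_zero]
    · intro v w hadj
      rw [hFdef]
      rcases (cycle_adj' hn).mp hadj with h | h
      · by_cases h1 : w = v + 1
        · rw [if_pos h1]; exact hxne v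
        · rw [if_neg h1, if_pos h]; exact neg_ne_zero.mpr (hxne w)
      · rw [if_pos h]; exact hxne v
    · intro v w hna
      rw [hFdef, cycle_adj' hn] at *
      push_neg at hna
      rw [if_neg hna.2, if_neg hna.1]
    · intro v
      rw [cycle_row_sum hn F ?_ v]
      · rw [hFdef, hFdef, if_pos rfl, if_neg (Ne.symm (fin_add_one_ne_sub_one' hn v)),
          if_pos (show v = v - 1 + 1 by abel)]
        by_cases hv : v = 0
        · subst hv
          rw [hx]
          simp only
          rw [hs0, hslast]
          abel
        · rw [hx]
          simp only
          rw [hsv v hv]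
          abel
      · intro u w hna
        rw [cycle_adj' hn] at hna
        push_neg at hna
        rw [hFdef, if_neg hna.2, if_neg hna.1]
end

section
/- The even wheel W_{2k} (k ≥ 1) is Z_3-connected, and the odd wheel W_{2k+1} (k ≥ 1) is not Z_3-connected. -/
open Finset

/-- A multigraph: an edge index type with two endpoint maps (a reference orientation). -/
structure Multigraph (V E : Type) where
  fst : E → V
  snd : E → V

/-- A multigraph `G` is `A`-connected: for every zero-sum function `b` there is an
orientation together with a nowhere-zero `A`-valued edge labeling whose boundary is `b`.
(Reorienting an edge corresponds to negating its value, so the orientation is absorbed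
into the group-valued labeling relative to the reference orientation.) -/
def Multigraph.AConn {V E : Type} [Fintype V] [Fintype E] [DecidableEq V]
    (A : Type) [AddCommGroup A] (G : Multigraph V E) : Prop :=
  ∀ b : V → A, ∑ v, b v = 0 →
    ∃ f : E → A, (∀ e, f e ≠ 0) ∧
      ∀ v, ((∑ e, if G.fst e = v then f e else 0) -
            ∑ e, if G.snd e = v then f e else 0) = b v

/-- The wheel `W_k`: a `k`-cycle (rim edges indexed by `Fin k`, edge `i` joining rim
vertex `i` to rim vertex `i+1 (mod k)`) together with a center (the `Unit` vertex)
joined to every rim vertex by a spoke. -/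
def wheel (k : ℕ) : Multigraph (Fin k ⊕ Unit) (Fin k ⊕ Fin k) where
  fst e :=
    match e with
    | .inl i => .inl i
    | .inr _ => .inr ()
  snd e :=
    match e with
    | .inl i => .inl ⟨(i.1 + 1) % k, Nat.mod_lt _ i.pos⟩
    | .inr i => .inl i

/-!
If `r` is the labeling of the rim edges, the spoke at rim vertex `i` must carry
`r i - r (i - 1) - b i`, so the even wheel is `Z₃`-connected as soon as `r` can be chosen
nowhere zero with `r i - r (i - 1) ≠ b i` for all `i`; the center then balances by itself, since
every boundary sums to zero. Such an `r` is built greedily around the rim starting at a vertex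
with `b ≠ 0` (the closing constraint there holds because `r = b` at that vertex), and when `b`
vanishes on the rim, `r` alternates between `1` and `-1`, which needs the rim to be even.

Conversely, for `b = 0` every rim vertex forces `r (i + 1) = -r i`; comparing
`∏ r (i + 1) = ∏ r i` with `(-1) ^ n * ∏ r i` shows that the rim is even.
-/

namespace Multigraph

variable {V E A : Type} [Fintype E] [DecidableEq V] [AddCommGroup A]

def boundary (G : Multigraph V E) (f : E → A) (v : V) : A :=
  (∑ e, if G.fst e = v then f e else 0) - ∑ e, if G.snd e = v then f e else 0

theorem aConn_iff [Fintype V] (G : Multigraph V E) :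
    G.AConn A ↔ ∀ b : V → A, ∑ v, b v = 0 →
      ∃ f : E → A, (∀ e, f e ≠ 0) ∧ ∀ v, G.boundary f v = b v :=
  Iff.rfl

variable [Fintype V]

theorem sum_boundary (G : Multigraph V E) (f : E → A) : ∑ v, G.boundary f v = 0 := by
  simp only [boundary, sum_sub_distrib]
  rw [sum_comm, sum_comm (f := fun v e => if G.snd e = v then f e else 0)]
  simp

theorem boundary_eq_of_forall_ne (G : Multigraph V E) {f : E → A} {b : V → A}
    (hb : ∑ v, b v = 0) (v₀ : V) (h : ∀ v ≠ v₀, G.boundary f v = b v) (v : V) :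
    G.boundary f v = b v := by
  have hsum : ∑ v, (G.boundary f v - b v) = 0 := by
    rw [sum_sub_distrib, sum_boundary, hb, sub_self]
  rw [Fintype.sum_eq_single v₀ fun v hv => sub_eq_zero.2 (h v hv)] at hsum
  obtain rfl | hv := eq_or_ne v v₀
  · exact sub_eq_zero.1 hsum
  · exact h v hv

end Multigraph

section Wheel

variable {n : ℕ} [NeZero n]

theorem wheel_snd_inl (i : Fin n) : (wheel n).snd (.inl i) = .inl (i + 1) := by
  simp [wheel, Fin.ext_iff, Fin.val_add]

theorem wheel_boundary_inl {A : Type} [AddCommGroup A] (f : Fin n ⊕ Fin n → A) (u : Fin n) :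
    (wheel n).boundary f (.inl u) = f (.inl u) - f (.inl (u - 1)) - f (.inr u) := by
  simp only [Multigraph.boundary, Fintype.sum_sum_type, wheel_snd_inl]
  simp [wheel, ← eq_sub_iff_add_eq]
  abel

end Wheel

theorem Fin.even_of_forall_add_one_eq_neg {R : Type} [CommRing R] [IsDomain R]
    (hR : (-1 : R) ≠ 1) {n : ℕ} [NeZero n] (g : Fin n → R) (hg₀ : ∀ i, g i ≠ 0)
    (hg : ∀ i, g (i + 1) = -g i) : Even n := by
  have hprod : ∏ i, g i = (-1) ^ n * ∏ i, g i := by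
    calc ∏ i, g i = ∏ i, g (i + 1) :=
          (Fintype.prod_equiv (Equiv.addRight 1) _ _ fun _ => rfl).symm
      _ = (-1) ^ n * ∏ i, g i := by simp only [hg, prod_neg, card_univ, Fintype.card_fin]
  have hne : ∏ i, g i ≠ 0 := prod_ne_zero_iff.2 fun i _ => hg₀ i
  rw [← neg_one_pow_eq_one_iff_even hR]
  exact (mul_eq_right₀ hne).1 hprod.symm

theorem Fin.neg_one_pow_val_sub_one {R : Type} [Ring R] {n : ℕ} [NeZero n] (hn : Even n)
    (i : Fin n) : (-1 : R) ^ (i - 1 : Fin n).val = -(-1) ^ i.val := by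
  obtain rfl | hi := eq_or_ne i 0
  · obtain ⟨m, rfl⟩ := Nat.exists_eq_succ_of_ne_zero (NeZero.ne n)
    have hm : Odd m := by simpa [Nat.even_add_one] using hn
    rw [zero_sub, Fin.coe_neg_one, hm.neg_one_pow, Fin.val_zero, pow_zero]
  · obtain ⟨m, hm⟩ := Nat.exists_eq_add_one_of_ne_zero (Fin.val_ne_zero_iff.2 hi)
    rw [Fin.val_sub_one_of_ne_zero hi, hm, Nat.add_sub_cancel, pow_succ, mul_neg_one, neg_neg]

theorem exists_seq_ne_zero_sub_ne (d : ℕ → ZMod 3) (x : ZMod 3) :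
    ∃ s : ℕ → ZMod 3, s 0 = x ∧ (∀ j, s (j + 1) ≠ 0) ∧
      ∀ j, s (j + 1) - s j ≠ d (j + 1) := by
  have : ∀ y e : ZMod 3, ∃ z, z ≠ 0 ∧ z - y ≠ e := by decide
  choose next hnext₀ hnext using this
  exact ⟨fun j => Nat.rec x (fun j y => next y (d (j + 1))) j, rfl,
    fun j => hnext₀ _ _, fun j => hnext _ _⟩

section RimLabeling

variable {n : ℕ} [NeZero n]

def IsRimLabeling (c r : Fin n → ZMod 3) : Prop :=
  (∀ i, r i ≠ 0) ∧ ∀ i, r i - r (i - 1) ≠ c i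

open Fin.NatCast in
theorem exists_isRimLabeling_of_apply_zero_ne_zero {c : Fin n → ZMod 3} (hc : c 0 ≠ 0) :
    ∃ r, IsRimLabeling c r := by
  obtain ⟨s, hs₀, hs_succ_ne_zero, hs⟩ := exists_seq_ne_zero_sub_ne (fun j => c j) (c 0)
  have hs_ne_zero : ∀ j, s j ≠ 0 := by
    rintro (_ | j)
    · rwa [hs₀]
    · exact hs_succ_ne_zero j
  refine ⟨fun i => s i.val, fun i => hs_ne_zero _, fun i => ?_⟩
  dsimp only
  obtain rfl | hi := eq_or_ne i 0
  · rw [Fin.val_zero, hs₀, Ne, sub_eq_self]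
    exact hs_ne_zero _
  · obtain ⟨j, hj⟩ := Nat.exists_eq_add_one_of_ne_zero (Fin.val_ne_zero_iff.2 hi)
    have := hs j
    rwa [← hj, Fin.cast_val_eq_self, ← Nat.add_sub_cancel j 1, ← hj,
      ← Fin.val_sub_one_of_ne_zero hi] at this

theorem exists_isRimLabeling_of_ne_zero {c : Fin n → ZMod 3} {i₀ : Fin n} (hc : c i₀ ≠ 0) :
    ∃ r, IsRimLabeling c r := by
  obtain ⟨r, hr₀, hr⟩ :=
    exists_isRimLabeling_of_apply_zero_ne_zero (c := fun i => c (i + i₀)) (by simpa using hc)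
  refine ⟨fun i => r (i - i₀), fun i => hr₀ _, fun i => ?_⟩
  simpa [sub_right_comm i 1 i₀] using hr (i - i₀)

theorem isRimLabeling_zero_neg_one_pow (hn : Even n) :
    IsRimLabeling 0 fun i : Fin n => (-1 : ZMod 3) ^ i.val := by
  have h : ∀ x : ZMod 3, x ≠ 0 → x - -x ≠ 0 := by decide
  refine ⟨fun i => pow_ne_zero _ (by decide), fun i => ?_⟩
  dsimp only
  rw [Fin.neg_one_pow_val_sub_one hn]
  exact h _ (pow_ne_zero _ (by decide))

theorem exists_isRimLabeling_of_even (hn : Even n) (c : Fin n → ZMod 3) :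
    ∃ r, IsRimLabeling c r := by
  by_cases hc : c = 0
  · exact hc ▸ ⟨_, isRimLabeling_zero_neg_one_pow hn⟩
  · obtain ⟨i₀, hi₀⟩ := Function.ne_iff.1 hc
    exact exists_isRimLabeling_of_ne_zero hi₀

end RimLabeling

theorem wheel_aConn_of_even {n : ℕ} (hn : Even n) : (wheel n).AConn (ZMod 3) := by
  rw [Multigraph.aConn_iff]
  intro b hb
  suffices ∃ f, (∀ e, f e ≠ 0) ∧ ∀ u, (wheel n).boundary f (.inl u) = b (.inl u) by
    obtain ⟨f, hf₀, hf⟩ := this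
    refine ⟨f, hf₀, (wheel n).boundary_eq_of_forall_ne hb (.inr ()) ?_⟩
    rintro (u | ⟨⟩) hu
    exacts [hf u, absurd rfl hu]
  rcases eq_or_ne n 0 with rfl | hn₀
  · exact ⟨fun _ => 1, fun _ => one_ne_zero, fun u => u.elim0⟩
  have : NeZero n := ⟨hn₀⟩
  obtain ⟨r, hr₀, hr⟩ := exists_isRimLabeling_of_even hn fun i => b (.inl i)
  refine ⟨Sum.elim r fun i => r i - r (i - 1) - b (.inl i), ?_, fun u => ?_⟩
  · rintro (i | i)
    exacts [hr₀ i, sub_ne_zero.2 (hr i)]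
  · rw [wheel_boundary_inl]
    simp only [Sum.elim_inl, Sum.elim_inr]
    abel

theorem wheel_not_aConn_of_odd {n : ℕ} (hn : Odd n) : ¬ (wheel n).AConn (ZMod 3) := by
  have : NeZero n := ⟨hn.pos.ne'⟩
  rw [Multigraph.aConn_iff]
  intro h
  obtain ⟨f, hf₀, hf⟩ := h 0 (by simp)
  have hrim : ∀ x y z : ZMod 3, x ≠ 0 → y ≠ 0 → z ≠ 0 → x - y - z = 0 → x = -y := by
    decide
  refine Nat.not_even_iff_odd.2 hn <| Fin.even_of_forall_add_one_eq_neg (by decide)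
    (fun i => f (.inl i)) (fun i => hf₀ _) fun i => ?_
  have hi := hf (.inl (i + 1))
  rw [wheel_boundary_inl, add_sub_cancel_right] at hi
  exact hrim _ _ _ (hf₀ _) (hf₀ _) (hf₀ _) hi

theorem even_wheel_Z3_odd_wheel_not_general (k : ℕ) :
    (wheel (2 * k)).AConn (ZMod 3) ∧ ¬ (wheel (2 * k + 1)).AConn (ZMod 3) :=
  ⟨wheel_aConn_of_even (even_two_mul k), wheel_not_aConn_of_odd (odd_two_mul_add_one k)⟩

/-- the even wheel `W_{2k}` (`k ≥ 1`) is `Z₃`-connected and the odd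
wheel `W_{2k+1}` (`k ≥ 1`) is not. -/
theorem even_wheel_Z3_odd_wheel_not (k : ℕ) (hk : 1 ≤ k) :
    (wheel (2 * k)).AConn (ZMod 3) ∧ ¬ (wheel (2 * k + 1)).AConn (ZMod 3) :=
  even_wheel_Z3_odd_wheel_not_general k
end

section
/- The complete bipartite graph K_{2,t} for t ≥ 2 is not Z_3-connected, and K_{3,s} for s ≥ 3 is not Z_3-connected. -/
open Finset

lemma two_aux : ∀ a b : ZMod 3, a ≠ 0 → b ≠ 0 → a + b = 1 → a = 2 ∧ b = 2 := by decide

lemma three_aux : ∀ a b c : ZMod 3, a ≠ 0 → b ≠ 0 → c ≠ 0 → a + b + c = 0 → a = b := by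
  decide

/-- `K_{2,t}` (`t ≥ 2`) and `K_{3,s}` (`s ≥ 3`) are not `Z₃`-connected. -/
theorem completeBipartite_not_Z3Conn :
    (∀ t : ℕ, 2 ≤ t → ¬ (completeBipartiteGraph (Fin 2) (Fin t)).Z3Conn) ∧
    (∀ s : ℕ, 3 ≤ s → ¬ (completeBipartiteGraph (Fin 3) (Fin s)).Z3Conn) := by
  constructor
  · intro t _ h
    set b : Fin 2 ⊕ Fin t → ZMod 3 :=
      Sum.elim ![(t : ZMod 3) + 1, (t : ZMod 3) - 1] (fun _ => 1) with hb
    have hsum : ∑ v, b v = 0 := by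
      rw [Fintype.sum_sum_type]
      simp [hb, Fin.sum_univ_two]
      ring_nf
      have : (3 : ZMod 3) = 0 := rfl
      rw [show ((t:ZMod 3) * 3 = (t:ZMod 3) * 0) by rw [this]]
      ring
    obtain ⟨f, hskew, hnz, hz, hbd⟩ := h b hsum
    -- each right vertex forces f (inr u) (inl i) = 2
    have key : ∀ u : Fin t, ∀ i : Fin 2, f (Sum.inr u) (Sum.inl i) = 2 := by
      intro u
      have h1 := hbd (Sum.inr u)
      rw [Fintype.sum_sum_type] at h1
      have hz2 : ∑ u' : Fin t, f (Sum.inr u) (Sum.inr u') = 0 := by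
        apply Finset.sum_eq_zero
        intro u' _
        exact hz _ _ (by simp [completeBipartiteGraph])
      rw [hz2, add_zero, Fin.sum_univ_two] at h1
      have hb1 : b (Sum.inr u) = 1 := rfl
      rw [hb1] at h1
      have hn0 : f (Sum.inr u) (Sum.inl 0) ≠ 0 := hnz _ _ (by simp [completeBipartiteGraph])
      have hn1 : f (Sum.inr u) (Sum.inl 1) ≠ 0 := hnz _ _ (by simp [completeBipartiteGraph])
      obtain ⟨e0, e1⟩ := two_aux _ _ hn0 hn1 h1
      intro i
      fin_cases i
      · exact e0
      · exact e1
    have h0 := hbd (Sum.inl 0)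
    rw [Fintype.sum_sum_type] at h0
    have hz1 : ∑ i : Fin 2, f (Sum.inl 0) (Sum.inl i) = 0 := by
      apply Finset.sum_eq_zero
      intro i _
      exact hz _ _ (by simp [completeBipartiteGraph])
    rw [hz1, zero_add] at h0
    have hrw : ∀ u : Fin t, f (Sum.inl 0) (Sum.inr u) = 1 := by
      intro u
      rw [hskew, key u 0]
      decide
    rw [Finset.sum_congr rfl (fun u _ => hrw u)] at h0
    simp [hb] at h0
  · intro s _ h
    set b : Fin 3 ⊕ Fin s → ZMod 3 :=
      Sum.elim ![0, 1, 2] (fun _ => 0) with hb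
    have hsum : ∑ v, b v = 0 := by
      rw [Fintype.sum_sum_type]
      simp [hb, Fin.sum_univ_three]
      decide
    obtain ⟨f, hskew, hnz, hz, hbd⟩ := h b hsum
    have key : ∀ u : Fin s, f (Sum.inr u) (Sum.inl 0) = f (Sum.inr u) (Sum.inl 1) := by
      intro u
      have h1 := hbd (Sum.inr u)
      rw [Fintype.sum_sum_type] at h1
      have hz2 : ∑ u' : Fin s, f (Sum.inr u) (Sum.inr u') = 0 := by
        apply Finset.sum_eq_zero
        intro u' _
        exact hz _ _ (by simp [completeBipartiteGraph])
      rw [hz2, add_zero, Fin.sum_univ_three] at h1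
      have hb1 : b (Sum.inr u) = 0 := rfl
      rw [hb1] at h1
      exact three_aux _ _ _ (hnz _ _ (by simp [completeBipartiteGraph]))
        (hnz _ _ (by simp [completeBipartiteGraph]))
        (hnz _ _ (by simp [completeBipartiteGraph])) h1
    have hleft : ∀ i : Fin 3, b (Sum.inl i) = ∑ u : Fin s, f (Sum.inl i) (Sum.inr u) := by
      intro i
      have h0 := hbd (Sum.inl i)
      rw [Fintype.sum_sum_type] at h0
      have hz1 : ∑ j : Fin 3, f (Sum.inl i) (Sum.inl j) = 0 := by
        apply Finset.sum_eq_zero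
        intro j _
        exact hz _ _ (by simp [completeBipartiteGraph])
      rw [hz1, zero_add] at h0
      exact h0.symm
    have heq : b (Sum.inl 0) = b (Sum.inl 1) := by
      rw [hleft 0, hleft 1]
      apply Finset.sum_congr rfl
      intro u _
      rw [hskew (Sum.inl 0) (Sum.inr u), hskew (Sum.inl 1) (Sum.inr u), key u]
    simp [hb] at heq
end

section
/- Let A be an abelian group with |A| ≥ 3, let G be an A-connected graph, and let v be a vertex not in G. If v is joined to G by at least two edges, then the resulting graph G ∪ {v} is A-connected. -/
open Finset

/-- if `G` is `A`-connected (`|A| ≥ 3`) and a new vertex `v` is joined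
to vertices of `G` by `m ≥ 2` edges (multiple edges allowed, attachment points
`a : Fin m → V`), the resulting graph is `A`-connected. -/
theorem AConn_add_vertex {V E : Type} [Fintype V] [Fintype E] [DecidableEq V]
    (A : Type) [AddCommGroup A] [Fintype A] (hA : 3 ≤ Fintype.card A)
    (G : Multigraph V E) (hG : G.AConn A) (m : ℕ) (hm : 2 ≤ m) (a : Fin m → V) :
    Multigraph.AConn A
      (Multigraph.mk
        (fun e : E ⊕ Fin m =>
          match e with
          | .inl e => (.inl (G.fst e) : V ⊕ Unit)
          | .inr _ => .inr ())
        (fun e : E ⊕ Fin m =>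
          match e with
          | .inl e => (.inl (G.snd e) : V ⊕ Unit)
          | .inr i => .inl (a i))) := by

  obtain ⟨k, rfl⟩ := Nat.exists_eq_add_of_le' hm
  intro b hb
  have hnt : Nontrivial A := Fintype.one_lt_card_iff_nontrivial.mp (by omega)
  obtain ⟨c, hc⟩ := exists_ne (0 : A)
  set s := b (.inr ()) with hs
  set t := s - k • c with ht
  obtain ⟨x, hx0, hxt⟩ : ∃ x : A, x ≠ 0 ∧ t - x ≠ 0 := by
    classical
    by_contra h
    push_neg at h
    have hsub : (Finset.univ : Finset A) ⊆ {0, t} := by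
      intro y _
      simp only [Finset.mem_insert, Finset.mem_singleton]
      by_cases h0 : y = 0
      · exact Or.inl h0
      · exact Or.inr (sub_eq_zero.mp (h y h0)).symm
    have := Finset.card_le_card hsub
    have h2 : ({0, t} : Finset A).card ≤ 2 :=
      le_trans (Finset.card_insert_le _ _) (by simp)
    simp [Finset.card_univ] at this
    omega
  set g : Fin (k + 2) → A := Fin.cons x (Fin.cons (t - x) fun _ => c) with hg
  have hgnz : ∀ i, g i ≠ 0 := by
    refine Fin.cases ?_ (Fin.cases ?_ ?_) <;>
      simp [hg, Fin.cons_zero, Fin.cons_succ, hx0, hxt, hc]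
  have hgsum : ∑ i, g i = s := by
    rw [hg, Fin.sum_cons, Fin.sum_cons]
    simp [Finset.sum_const, Finset.card_univ, ht]
    abel
  set b' : V → A := fun w => b (.inl w) + ∑ i, if a i = w then g i else 0 with hb'
  have hb'sum : ∑ w, b' w = 0 := by
    have hswap : ∑ w, ∑ i, (if a i = w then g i else 0)
        = ∑ i, ∑ w, (if a i = w then g i else 0) := Finset.sum_comm
    have : ∑ i : Fin (k+2), ∑ w, (if a i = w then g i else 0) = ∑ i, g i := by
      simp [Finset.sum_ite_eq]
    rw [hb']
    rw [Finset.sum_add_distrib, hswap, this, hgsum]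
    have := hb
    rw [Fintype.sum_sum_type] at this
    simpa using this
  obtain ⟨f, hf0, hf⟩ := hG b' hb'sum
  refine ⟨Sum.elim f g, ?_, ?_⟩
  · rintro (e | i)
    · exact hf0 e
    · exact hgnz i
  · rintro (w | u)
    · simp only [Fintype.sum_sum_type, Sum.elim_inl, Sum.elim_inr,
        Sum.inl.injEq, reduceCtorEq, if_false, if_neg, Finset.sum_const_zero, add_zero]
      have h := hf w
      rw [hb'] at h
      rw [sub_add_eq_sub_sub, h, add_sub_cancel_right]
    · have h := hf
      simp only [Fintype.sum_sum_type, Sum.elim_inl, Sum.elim_inr,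
        reduceCtorEq, if_false, Finset.sum_const_zero, zero_add, add_zero, sub_zero]
      simp [hgsum, hs]
end

section
/- Let G be a graph with a vertex u of degree at least 4 and edges uv, uw with v, u, w an induced path. Let A be an abelian group with |A| ≥ 3. If the graph G_{[uv,uw]}, obtained from G by deleting edges uv and uw and adding a new edge vw, is A-connected, then G is A-connected. -/
open Finset

set_option maxHeartbeats 1000000 in
/-- let `u` have degree at least 4, with `v, u, w` an induced path.
If the graph `G_{[uv,uw]}` obtained by deleting the edges `uv, uw` and adding the
edge `vw` is `A`-connected (`|A| ≥ 3`), then so is `G`. -/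
theorem AConnS_of_shift {V : Type} [Fintype V] [DecidableEq V]
    (A : Type) [AddCommGroup A] [Fintype A] (hA : 3 ≤ Fintype.card A)
    (G : SimpleGraph V) (u v w : V) (hvw : v ≠ w)
    (huv : G.Adj u v) (huw : G.Adj u w) (hnadj : ¬ G.Adj v w)
    (hdeg : 4 ≤ (G.neighborSet u).ncard)
    (h : SimpleGraph.AConnS A
      ((G.deleteEdges {s(u, v), s(u, w)}) ⊔ SimpleGraph.fromEdgeSet {s(v, w)})) :
    G.AConnS A := by
  intro b hb
  obtain ⟨f, hskew, hne, hz, hbd⟩ := h b hb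
  have huv' : u ≠ v := huv.ne
  have huw' : u ≠ w := huw.ne
  set G' := (G.deleteEdges {s(u, v), s(u, w)}) ⊔ SimpleGraph.fromEdgeSet {s(v, w)} with hG'
  have hadjvw : G'.Adj v w := by
    simp [hG', SimpleGraph.sup_adj, SimpleGraph.fromEdgeSet_adj, hvw]
  have ha : f v w ≠ 0 := hne v w hadjvw
  have h0uv : f u v = 0 := by
    apply hz
    simp only [hG', SimpleGraph.sup_adj, SimpleGraph.deleteEdges_adj,
      SimpleGraph.fromEdgeSet_adj, Set.mem_insert_iff, Set.mem_singleton_iff, Sym2.eq,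
      Sym2.rel_iff', Prod.mk.injEq, Prod.swap_prod_mk]
    tauto
  have h0uw : f u w = 0 := by
    apply hz
    simp only [hG', SimpleGraph.sup_adj, SimpleGraph.deleteEdges_adj,
      SimpleGraph.fromEdgeSet_adj, Set.mem_insert_iff, Set.mem_singleton_iff, Sym2.eq,
      Sym2.rel_iff', Prod.mk.injEq, Prod.swap_prod_mk]
    tauto
  set a := f v w with hadef
  clear_value a
  set g : V → V → A := fun x y =>
    if (x = v ∧ y = w) ∨ (x = w ∧ y = v) then 0
    else if x = u ∧ y = v then -a
    else if x = v ∧ y = u then a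
    else if x = u ∧ y = w then a
    else if x = w ∧ y = u then -a
    else f x y with hgdef
  refine ⟨g, ?_, ?_, ?_, ?_⟩
  · intro x y
    simp only [hgdef]
    clear hgdef hG' h hne hz hbd hb hadef ha h0uv h0uw hadjvw b
    clear g G'
    split_ifs <;>
      first
      | exact hskew x y
      | (clear hskew; aesop)
  · intro x y hxy
    simp only [hgdef]
    split_ifs with h1 h2 h3 h4 h5
    · exfalso
      rcases h1 with ⟨rfl, rfl⟩ | ⟨rfl, rfl⟩
      · exact hnadj hxy
      · exact hnadj hxy.symm
    · simpa using ha
    · exact ha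
    · exact ha
    · simpa using ha
    · apply hne
      simp only [hG', SimpleGraph.sup_adj, SimpleGraph.deleteEdges_adj,
        Set.mem_insert_iff, Set.mem_singleton_iff, Sym2.eq, Sym2.rel_iff',
        Prod.mk.injEq, Prod.swap_prod_mk]
      left
      refine ⟨hxy, ?_⟩
      push_neg at h1 h2 h3 h4 h5 ⊢
      exact ⟨⟨h2, h3⟩, h4, h5⟩
  · intro x y hxy
    simp only [hgdef]
    split_ifs with h1 h2 h3 h4 h5
    · rfl
    · exact absurd (h2.1 ▸ h2.2 ▸ huv) hxy
    · exact absurd (h3.1 ▸ h3.2 ▸ huv.symm) hxy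
    · exact absurd (h4.1 ▸ h4.2 ▸ huw) hxy
    · exact absurd (h5.1 ▸ h5.2 ▸ huw.symm) hxy
    · apply hz
      simp only [hG', SimpleGraph.sup_adj, SimpleGraph.deleteEdges_adj,
        SimpleGraph.fromEdgeSet_adj, Set.mem_insert_iff, Set.mem_singleton_iff,
        Sym2.eq, Sym2.rel_iff', Prod.mk.injEq, Prod.swap_prod_mk]
      push_neg at h1
      rintro (⟨hadj, -⟩ | ⟨(⟨rfl, rfl⟩ | ⟨rfl, rfl⟩), -⟩)
      · exact hxy hadj
      · exact (h1.1 rfl) rfl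
      · exact (h1.2 rfl) rfl
  · intro x
    clear h hne hz hG' hadjvw hb ha hnadj huv huw hdeg hA
    have hkey : ∀ y, y ∉ ({u, v, w} : Finset V) → g x y = f x y := by
      intro y hy
      simp only [Finset.mem_insert, Finset.mem_singleton, not_or] at hy
      simp only [hgdef]
      split_ifs <;> tauto
    have hsub : ∑ y ∈ ({u, v, w} : Finset V), (g x y - f x y) = ∑ y, (g x y - f x y) := by
      apply Finset.sum_subset (Finset.subset_univ _)
      intro y _ hy
      rw [hkey y hy, sub_self]
    have hfin : ({u, v, w} : Finset V).card = 3 := by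
      rw [Finset.card_insert_of_notMem (by simp [huv', huw']),
        Finset.card_insert_of_notMem (by simp [hvw]), Finset.card_singleton]
    have htriple : ∑ y ∈ ({u, v, w} : Finset V), (g x y - f x y)
        = (g x u - f x u) + (g x v - f x v) + (g x w - f x w) := by
      rw [show ({u, v, w} : Finset V) = insert u (insert v {w}) from rfl,
        Finset.sum_insert (by simp [huv', huw']),
        Finset.sum_insert (by simp [hvw]), Finset.sum_singleton]
      abel
    have hzero : ∑ y ∈ ({u, v, w} : Finset V), (g x y - f x y) = 0 := by
      rw [htriple]
      by_cases hxu : x = u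
      · subst hxu
        have e1 : g x x = f x x := by simp [hgdef, huv', huw', hvw, Ne.symm huv', Ne.symm huw', Ne.symm hvw]
        have e2 : g x v = -a := by simp [hgdef, huv', huw', hvw, Ne.symm huv', Ne.symm huw', Ne.symm hvw]
        have e3 : g x w = a := by simp [hgdef, huv', huw', hvw, Ne.symm huv', Ne.symm huw', Ne.symm hvw]
        rw [e1, e2, e3, h0uv, h0uw]; abel
      · by_cases hxv : x = v
        · subst hxv
          have e1 : g x u = a := by simp [hgdef, huv', huw', hvw, Ne.symm huv', Ne.symm huw', Ne.symm hvw]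
          have e2 : g x x = f x x := by simp [hgdef, huv', huw', hvw, Ne.symm huv', Ne.symm huw', Ne.symm hvw]
          have e3 : g x w = 0 := by simp [hgdef, huv', huw', hvw, Ne.symm huv', Ne.symm huw', Ne.symm hvw]
          have f1 : f x u = 0 := by rw [hskew x u, h0uv, neg_zero]
          rw [e1, e2, e3, f1, ← hadef]; abel
        · by_cases hxw : x = w
          · subst hxw
            have e1 : g x u = -a := by simp [hgdef, huv', huw', hvw, Ne.symm huv', Ne.symm huw', Ne.symm hvw]
            have e2 : g x v = 0 := by simp [hgdef, huv', huw', hvw, Ne.symm huv', Ne.symm huw', Ne.symm hvw]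
            have e3 : g x x = f x x := by simp [hgdef, huv', huw', hvw, Ne.symm huv', Ne.symm huw', Ne.symm hvw]
            have f1 : f x u = 0 := by rw [hskew x u, h0uw, neg_zero]
            have f2 : f x v = -a := by rw [hskew x v, ← hadef]
            rw [e1, e2, e3, f1, f2]; abel
          · have e : ∀ y, g x y = f x y := by
              intro y; simp [hgdef, hxu, hxv, hxw]
            rw [e u, e v, e w]; abel
    have : ∑ y, (g x y - f x y) = 0 := by rw [← hsub, hzero]
    rw [Finset.sum_sub_distrib] at this
    have := sub_eq_zero.mp this
    rw [this, hbd x]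
end

section
/- For every odd integer k ≥ 3, neither the degree sequence (k, 3^k) nor the degree sequence (k^2, 3^{k-1}) (i.e., (k, k, 3, ..., 3) with k−1 threes) has a Z_3-connected realization. -/
/-!
A `Z₃`-connected graph carries a nowhere-zero `Z₃`-flow (take boundary `0`), and at a vertex of
degree 3 such a flow sends the same value along all three edges, since three nonzero elements of
`Z₃` summing to `0` are equal.

For `(k, 3^k)` the vertex of degree `k` is adjacent to all others, and the others induce a
2-regular graph. Along an edge `w w'` of it, `f w u = f w w' = -f w' w = -f w' u`, so the value
`f w u ∈ {1, 2}` is a proper 2-colouring of a 2-regular graph on `k` vertices, forcing `k` even.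

For `(k², 3^{k-1})` both vertices `u, v` of degree `k` are universal, and every other vertex `w`
has `f w u = f w v`. Subtracting the conservation laws at `u` and `v` gives `2 f u v = 0`, so
`f u v = 0` although `u v` is an edge.
-/

open Finset

theorem ZMod.three_eq_and_eq_of_add_add_eq_zero {a b c : ZMod 3} (ha : a ≠ 0) (hb : b ≠ 0)
    (hc : c ≠ 0) (h : a + b + c = 0) : a = b ∧ a = c := by
  revert a b c; decide

theorem ZMod.three_eq_one_iff_neg_ne_one {a : ZMod 3} (ha : a ≠ 0) : a = 1 ↔ -a ≠ 1 := by
  revert a; decide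

theorem ZMod.three_eq_zero_of_add_self_eq_zero {a : ZMod 3} (h : a + a = 0) : a = 0 := by
  revert a; decide

theorem degSeq.exists_perm_degree_eq {n : ℕ} {G : SimpleGraph (Fin n)} [DecidableRel G.Adj]
    {d : Fin n → ℕ} (h : degSeq G d) : ∃ σ : Equiv.Perm (Fin n), ∀ w, G.degree w = d (σ w) := by
  obtain ⟨σ, hσ⟩ := h
  refine ⟨σ.symm, fun w => ?_⟩
  rw [← hσ, Equiv.apply_symm_apply, ← Nat.card_coe_set_eq, Nat.card_eq_fintype_card,
    SimpleGraph.card_neighborSet_eq_degree]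

namespace SimpleGraph

variable {V : Type} {G : SimpleGraph V}

/-- Double counting the edges between the two colour classes shows that they have equal size. -/
theorem even_card_of_regular_of_two_coloring [DecidableRel G.Adj] (s : Finset V) (c : V → Prop)
    [DecidablePred c] {r : ℕ} (hr : r ≠ 0) (hreg : ∀ v ∈ s, #{w ∈ s | G.Adj v w} = r)
    (hc : ∀ v ∈ s, ∀ w ∈ s, G.Adj v w → (c v ↔ ¬ c w)) : Even #s := by
  set P := {v ∈ s | c v}
  set Q := {v ∈ s | ¬ c v}
  have hP : ∀ v ∈ P, #(Q.bipartiteAbove G.Adj v) = r := by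
    intro v hv
    rw [mem_filter] at hv
    rw [← hreg v hv.1, bipartiteAbove, filter_filter]
    exact congrArg card <| filter_congr fun w hw => by grind
  have hQ : ∀ w ∈ Q, #(P.bipartiteBelow G.Adj w) = r := by
    intro w hw
    rw [mem_filter] at hw
    rw [← hreg w hw.1, bipartiteBelow, filter_filter]
    exact congrArg card <| filter_congr fun v hv => by grind [G.adj_comm]
  have hPQ : #P = #Q := Nat.eq_of_mul_eq_mul_right (Nat.pos_of_ne_zero hr)
    (card_mul_eq_card_mul G.Adj hP hQ)
  rw [← card_filter_add_card_filter_not c]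
  exact ⟨#P, by rw [hPQ]⟩

variable [Fintype V] {A : Type} [AddCommGroup A]

/-- A nowhere-zero `A`-flow, in the encoding of `SimpleGraph.AConnS` with boundary `0`. -/
structure IsNowhereZeroFlow (G : SimpleGraph V) (f : V → V → A) : Prop where
  skew : ∀ v w, f v w = - f w v
  ne_zero : ∀ v w, G.Adj v w → f v w ≠ 0
  eq_zero : ∀ v w, ¬ G.Adj v w → f v w = 0
  sum_eq_zero : ∀ v, ∑ w, f v w = 0

theorem AConnS.exists_isNowhereZeroFlow (hG : G.AConnS A) :
    ∃ f : V → V → A, G.IsNowhereZeroFlow f := by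
  obtain ⟨f, hskew, hne, hzero, hsum⟩ := hG 0 (by simp)
  exact ⟨f, ⟨hskew, hne, hzero, hsum⟩⟩

namespace IsNowhereZeroFlow

variable [DecidableRel G.Adj]

theorem sum_neighborFinset_eq_zero {f : V → V → A} (hf : G.IsNowhereZeroFlow f) (v : V) :
    ∑ w ∈ G.neighborFinset v, f v w = 0 := by
  rw [← hf.sum_eq_zero v]
  exact sum_subset (subset_univ _) fun w _ hw => hf.eq_zero v w (by simpa using hw)

variable {f : V → V → ZMod 3}

theorem eq_of_degree_eq_three (hf : G.IsNowhereZeroFlow f) {w : V} (hw : G.degree w = 3)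
    {x y : V} (hx : G.Adj w x) (hy : G.Adj w y) : f w x = f w y := by
  classical
  obtain ⟨a, b, c, hab, hac, hbc, hN⟩ := card_eq_three.mp hw
  have hmem : ∀ z, G.Adj w z ↔ z = a ∨ z = b ∨ z = c := fun z => by
    rw [← mem_neighborFinset, hN]; simp
  have hsum := hf.sum_neighborFinset_eq_zero w
  rw [hN, sum_insert (by simp [hab, hac]), sum_pair hbc, ← add_assoc] at hsum
  obtain ⟨hfab, hfac⟩ := ZMod.three_eq_and_eq_of_add_add_eq_zero
    (hf.ne_zero _ _ ((hmem a).2 (by simp))) (hf.ne_zero _ _ ((hmem b).2 (by simp)))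
    (hf.ne_zero _ _ ((hmem c).2 (by simp))) hsum
  have hconst : ∀ z, G.Adj w z → f w z = f w a := fun z hz => by
    rcases (hmem z).1 hz with rfl | rfl | rfl
    · rfl
    · exact hfab.symm
    · exact hfac.symm
  rw [hconst x hx, hconst y hy]

theorem even_card_sub_one_of_isUniversal [DecidableEq V] (hf : G.IsNowhereZeroFlow f) {u : V}
    (hu : G.IsUniversal u) (h3 : ∀ w, w ≠ u → G.degree w = 3) : Even (Fintype.card V - 1) := by
  rw [← card_univ, ← card_erase_of_mem (mem_univ u)]
  refine even_card_of_regular_of_two_coloring (G := G) _ (fun w => f w u = 1) two_ne_zero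
    (fun w hw => ?_) (fun w hw z hz hwz => ?_)
  · have hwu := (mem_erase.1 hw).1
    have hN : {z ∈ univ.erase u | G.Adj w z} = (G.neighborFinset w).erase u := by
      ext z; simp [and_comm]
    rw [hN, card_erase_of_mem (by simpa using (hu hwu.symm).symm), card_neighborFinset_eq_degree,
      h3 w hwu]
  · have hwu := (mem_erase.1 hw).1
    have hzu := (mem_erase.1 hz).1
    have hfzu : f z u = -f w u := by
      rw [← hf.eq_of_degree_eq_three (h3 z hzu) hwz.symm (hu hzu.symm).symm,
        ← hf.eq_of_degree_eq_three (h3 w hwu) hwz (hu hwu.symm).symm, hf.skew]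
    rw [hfzu]
    exact ZMod.three_eq_one_iff_neg_ne_one (hf.ne_zero w u (hu hwu.symm).symm)

theorem false_of_isUniversal_pair (hf : G.IsNowhereZeroFlow f) {u v : V} (huv : u ≠ v)
    (hu : G.IsUniversal u) (hv : G.IsUniversal v)
    (h3 : ∀ w, w ≠ u → w ≠ v → G.degree w = 3) : False := by
  have hcancel : ∀ x, x ≠ u ∧ x ≠ v → f u x - f v x = 0 := fun x ⟨hxu, hxv⟩ => by
    rw [hf.skew u, hf.skew v, hf.eq_of_degree_eq_three (h3 x hxu hxv) (hu hxu.symm).symm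
      (hv hxv.symm).symm, sub_self]
  have hsum : ∑ x, (f u x - f v x) = 0 := by
    rw [sum_sub_distrib, hf.sum_eq_zero, hf.sum_eq_zero, sub_zero]
  rw [Fintype.sum_eq_add u v huv hcancel, hf.eq_zero u u (G.loopless.irrefl u),
    hf.eq_zero v v (G.loopless.irrefl v), hf.skew v u] at hsum
  exact hf.ne_zero u v (hu huv) (ZMod.three_eq_zero_of_add_self_eq_zero (by simpa using hsum))

end IsNowhereZeroFlow

end SimpleGraph

theorem no_Z3_realization_k_3k_general (k : ℕ) (hodd : Odd k) :
    (¬ ∃ G : SimpleGraph (Fin (k + 1)),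
        degSeq G (fun i => if (i : ℕ) = 0 then k else 3) ∧ G.Z3Conn) ∧
    (¬ ∃ G : SimpleGraph (Fin (k + 1)),
        degSeq G (fun i => if (i : ℕ) < 2 then k else 3) ∧ G.Z3Conn) := by
  classical
  constructor
  · rintro ⟨G, hdeg, hG⟩
    obtain ⟨f, hf⟩ := hG.exists_isNowhereZeroFlow
    obtain ⟨σ, hσ⟩ := hdeg.exists_perm_degree_eq
    have hu : G.IsUniversal (σ.symm 0) := by
      rw [← SimpleGraph.degree_eq_card_sub_one, hσ]; simp
    have h3 : ∀ w, w ≠ σ.symm 0 → G.degree w = 3 := fun w hw => by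
      rw [hσ, if_neg fun h : (σ w : ℕ) = 0 => hw (σ.eq_symm_apply.2 (Fin.ext h))]
    have := hf.even_card_sub_one_of_isUniversal hu h3
    rw [Fintype.card_fin, Nat.add_sub_cancel] at this
    exact Nat.not_even_iff_odd.2 hodd this
  · rintro ⟨G, hdeg, hG⟩
    obtain ⟨f, hf⟩ := hG.exists_isNowhereZeroFlow
    obtain ⟨σ, hσ⟩ := hdeg.exists_perm_degree_eq
    let one : Fin (k + 1) := ⟨1, by have := hodd.pos; omega⟩
    have huniv : ∀ i : Fin (k + 1), (i : ℕ) < 2 → G.IsUniversal (σ.symm i) := fun i hi => by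
      rw [← SimpleGraph.degree_eq_card_sub_one, hσ]; simp [hi]
    refine hf.false_of_isUniversal_pair (u := σ.symm 0) (v := σ.symm one) (by simp [one])
      (huniv 0 (by simp)) (huniv one (by simp [one])) fun w hw0 hw1 => ?_
    rw [hσ, if_neg fun h => ?_]
    obtain h0 | h1 : σ w = 0 ∨ σ w = one := by simp only [Fin.ext_iff, Fin.val_zero, one]; omega
    · exact hw0 (σ.eq_symm_apply.2 h0)
    · exact hw1 (σ.eq_symm_apply.2 h1)

/-- for odd `k ≥ 3`, neither `(k, 3^k)` nor `(k², 3^{k-1})` has a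
`Z₃`-connected realization. -/
theorem no_Z3_realization_k_3k (k : ℕ) (hk : 3 ≤ k) (hodd : Odd k) :
    (¬ ∃ G : SimpleGraph (Fin (k + 1)),
        degSeq G (fun i => if (i : ℕ) = 0 then k else 3) ∧ G.Z3Conn) ∧
    (¬ ∃ G : SimpleGraph (Fin (k + 1)),
        degSeq G (fun i => if (i : ℕ) < 2 then k else 3) ∧ G.Z3Conn) :=
  no_Z3_realization_k_3k_general k hodd
end

section
/- For every n ≥ 3, the degree sequence (n − 3, 3^{n−1}) (one vertex of degree n − 3 and n − 1 vertices of degree 3) has no Z_3-connected realization. -/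
open Finset

/-!
Take the boundary `1` at every vertex of degree `3` and `1 - n` at the exceptional vertex. In a
nowhere-zero `ℤ/3`-flow with this boundary, three values from `{1, 2}` summing to `1` must be
`1, 1, 2`, so each cubic vertex has exactly two edges leaving it with value `1`. Orienting every
edge along its value `1` therefore gives at least `2 (n - 1)` edges, whereas the degree sum
`(n - 3) + 3 (n - 1)` allows only `2n - 3`.
-/

theorem Fintype.sum_eq_add_of_forall_ne {α M : Type*} [Fintype α] [DecidableEq α]
    [AddCommMonoid M] (g : α → M) (u : α) {k : M} (h : ∀ v ≠ u, g v = k) :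
    ∑ v, g v = g u + (Fintype.card α - 1) • k := by
  rw [Fintype.sum_eq_add_sum_compl u, Finset.sum_congr rfl fun v hv => h v (by simpa using hv),
    sum_const, card_compl, card_singleton]

namespace ZMod

variable {α : Type*} [Fintype α] (g : α → ZMod 3)

theorem card_filter_ne_zero_eq :
    #{a | g a ≠ 0} = #{a | g a = 1} + #{a | g a = 2} := by
  simp only [card_filter, ← sum_add_distrib]
  exact sum_congr rfl fun a _ => by generalize g a = x; revert x; decide

theorem sum_eq_card_filter_one_add_two_mul :
    ∑ a, g a = #{a | g a = 1} + 2 * #{a | g a = 2} := by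
  simp only [card_filter, Nat.cast_sum, mul_sum, ← sum_add_distrib]
  exact sum_congr rfl fun a _ => by generalize g a = x; revert x; decide

theorem card_filter_eq_one_eq_two (hsupp : #{a | g a ≠ 0} = 3) (hsum : ∑ a, g a = 1) :
    #{a | g a = 1} = 2 := by
  rw [card_filter_ne_zero_eq] at hsupp
  rw [sum_eq_card_filter_one_add_two_mul, ← Nat.sub_eq_of_eq_add' hsupp.symm] at hsum
  have : #{a | g a = 1} ≤ 3 := by omega
  interval_cases h : #{a | g a = 1} <;> revert hsum <;> decide

/-- By skew-symmetry, a `2` at `(v, w)` is a `1` at `(w, v)`. -/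
theorem two_mul_sum_card_filter_eq_one {f : α → α → ZMod 3} (hskew : ∀ v w, f v w = -f w v) :
    2 * ∑ v, #{w | f v w = 1} = ∑ v, #{w | f v w ≠ 0} := by
  have htwo : ∀ v w, f v w = 2 ↔ f w v = 1 := fun v w => by
    rw [hskew v w]; generalize f w v = x; revert x; decide
  simp only [card_filter_ne_zero_eq, sum_add_distrib, htwo]
  rw [two_mul]
  congr 1
  simp only [card_filter]
  exact sum_comm

end ZMod

theorem SimpleGraph.degree_eq_card_filter_ne_zero {V M : Type*} [Fintype V] [Zero M]
    [DecidableEq M] (G : SimpleGraph V) [DecidableRel G.Adj] {f : V → V → M}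
    (hadj : ∀ v w, G.Adj v w ↔ f v w ≠ 0) (v : V) : G.degree v = #{w | f v w ≠ 0} := by
  rw [← card_neighborFinset_eq_degree]
  congr 1
  ext w
  simp [hadj]

theorem degSeq.exists_degree_eq {n a b : ℕ} {G : SimpleGraph (Fin n)} [DecidableRel G.Adj]
    (hn : 0 < n) (h : degSeq G fun i => if (i : ℕ) = 0 then a else b) :
    ∃ u, G.degree u = a ∧ ∀ v ≠ u, G.degree v = b := by
  obtain ⟨σ, hσ⟩ := h
  have hdeg : ∀ i, G.degree (σ i) = if (i : ℕ) = 0 then a else b := fun i =>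
    (Set.ncard_eq_toFinset_card' _).symm.trans (hσ i)
  refine ⟨σ ⟨0, hn⟩, hdeg _, fun v hv => ?_⟩
  rw [← σ.apply_symm_apply v, hdeg, if_neg]
  exact fun h0 => hv (σ.symm_apply_eq.mp (Fin.ext h0))

/-- for `n ≥ 3`, the sequence `(n-3, 3^{n-1})` has no `Z₃`-connected
realization. -/
theorem no_Z3_realization_nm3 (n : ℕ) (hn : 3 ≤ n) :
    ¬ ∃ G : SimpleGraph (Fin n),
        degSeq G (fun i => if (i : ℕ) = 0 then n - 3 else 3) ∧ G.Z3Conn := by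
  rintro ⟨G, hseq, hZ⟩
  classical
  obtain ⟨u, hu, hcubic⟩ := hseq.exists_degree_eq (by omega)
  obtain ⟨f, hskew, hnz, hz, hb⟩ := hZ (fun v => 1 - Pi.single (M := fun _ => ZMod 3) u n v) (by
    simp [sum_sub_distrib])
  have hdeg := G.degree_eq_card_filter_ne_zero (f := f)
    fun v w => ⟨hnz v w, not_imp_comm.mp (hz v w)⟩
  have hones : ∀ v ≠ u, #{w | f v w = 1} = 2 := fun v hv =>
    ZMod.card_filter_eq_one_eq_two _ (by rw [← hdeg, hcubic v hv])
      (by rw [hb, Pi.single_eq_of_ne hv, sub_zero])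
  have hcount := ZMod.two_mul_sum_card_filter_eq_one hskew
  simp only [← hdeg] at hcount
  rw [Fintype.sum_eq_add_of_forall_ne _ u hones, Fintype.sum_eq_add_of_forall_ne _ u hcubic,
    hu, Fintype.card_fin, smul_eq_mul, smul_eq_mul] at hcount
  omega
end
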